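/- arXiv:2503.10304 — 3 statements merged into one kernel-verified Lean document; each statement's English description precedes it below -/
import Mathlib

section
/- Let f : ℝ^n → ℝ be differentiable with Z-Lipschitz gradient, suppose its set S of global maximizers is nonempty with supremum f*, and suppose f satisfies the μ-PL condition: ‖∇f(x)‖² ≥ μ·(f* − f(x)) for all x, with μ > 0. Then f satisfies the quadratic-growth condition with constant μ/4: for every x, f* − f(x) ≥ (μ/4)·dist(x, S)², where dist(x,S) = inf_{y∈S} ‖x − y‖. (PL implies QG, used in the proof of Theorem 5.1) -/
open scoped NNReal RealInnerProductSpace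
open Filter Topology
set_option maxHeartbeats 1000000
noncomputable section

lemma descent_aux {n : ℕ} {f : EuclideanSpace ℝ (Fin n) → ℝ} {Z : ℝ≥0}
    (hdiff : Differentiable ℝ f) (hlip : LipschitzWith Z (gradient f))
    (x v : EuclideanSpace ℝ (Fin n)) :
    f x + ⟪gradient f x, v⟫ - Z * ‖v‖ ^ 2 ≤ f (x + v) := by
  have key : ‖f (x + v) - f x -
      (InnerProductSpace.toDual ℝ (EuclideanSpace ℝ (Fin n)) (gradient f x)) ((x + v) - x)‖ ≤
      ((Z : ℝ) * ‖v‖) * ‖(x + v) - x‖ := by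
    apply Convex.norm_image_sub_le_of_norm_hasFDerivWithin_le'
      (f' := fun z => InnerProductSpace.toDual ℝ (EuclideanSpace ℝ (Fin n)) (gradient f z))
      (fun z _ => ((hdiff z).hasGradientAt.hasFDerivAt).hasFDerivWithinAt)
      (fun z hz => ?_) (convex_closedBall x ‖v‖)
      (Metric.mem_closedBall_self (norm_nonneg v)) ?_
    · simp [Metric.mem_closedBall, dist_eq_norm]
    · rw [← map_sub, (InnerProductSpace.toDual ℝ (EuclideanSpace ℝ (Fin n))).norm_map]
      calc ‖gradient f z - gradient f x‖ ≤ Z * dist z x := by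
            simpa [dist_eq_norm] using hlip.dist_le_mul z x
        _ ≤ Z * ‖v‖ := mul_le_mul_of_nonneg_left (Metric.mem_closedBall.mp hz) Z.2
  rw [add_sub_cancel_left, InnerProductSpace.toDual_apply_apply, Real.norm_eq_abs] at key
  have h2 := (abs_le.mp key).1
  nlinarith [h2]

lemma aux_key {n : ℕ} {f : EuclideanSpace ℝ (Fin n) → ℝ} {Z : ℝ≥0} {μ : ℝ}
    (hμ : 0 < μ) (hdiff : Differentiable ℝ f) (hlip : LipschitzWith Z (gradient f))
    {x₀ : EuclideanSpace ℝ (Fin n)} (hx₀ : ∀ y, f y ≤ f x₀)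
    (hPL : ∀ y, μ * (f x₀ - f y) ≤ ‖gradient f y‖ ^ 2)
    {η : ℝ} (hη : 0 < η) (hZη : (Z : ℝ) * η ≤ 1 / 2) (hμη : μ * η ≤ 1)
    {S : Set (EuclideanSpace ℝ (Fin n))} (hS : S = {x | ∀ y, f y ≤ f x})
    (x : EuclideanSpace ℝ (Fin n)) :
    (1 - Z * η) * Real.sqrt μ / 2 * Metric.infDist x S ≤ Real.sqrt (f x₀ - f x) := by
  set g := gradient f with hg
  set Δ : EuclideanSpace ℝ (Fin n) → ℝ := fun y => f x₀ - f y with hΔ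
  have hΔ0 : ∀ y, 0 ≤ Δ y := fun y => sub_nonneg.mpr (hx₀ y)
  set T : EuclideanSpace ℝ (Fin n) → EuclideanSpace ℝ (Fin n) :=
    fun y => y + η • g y with hT
  set c : ℝ := 1 - Z * η with hc
  have hc2 : (1:ℝ)/2 ≤ c := by simp only [hc]; linarith
  have hc1 : c ≤ 1 := by
    have : (0:ℝ) ≤ (Z : ℝ) * η := mul_nonneg Z.2 hη.le
    simp only [hc]; linarith
  have hc0 : 0 < c := lt_of_lt_of_le (by norm_num) hc2
  -- descent per step
  have step0 : ∀ y, Δ (T y) ≤ Δ y - η * c * ‖g y‖ ^ 2 := by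
    intro y
    have h := descent_aux hdiff hlip y (η • g y)
    rw [real_inner_smul_right, real_inner_self_eq_norm_sq, norm_smul, Real.norm_eq_abs,
      abs_of_pos hη, mul_pow] at h
    simp only [hΔ, hT, hc]
    nlinarith [h]
  have hΔmono : ∀ y, Δ (T y) ≤ Δ y := by
    intro y
    have := step0 y
    nlinarith [sq_nonneg ‖g y‖, mul_pos hη hc0]
  -- sqrt decrease per step
  have step_sqrt : ∀ y, η * ‖g y‖ * (c * Real.sqrt μ / 2) ≤
      Real.sqrt (Δ y) - Real.sqrt (Δ (T y)) := by
    intro y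
    set D := Δ y
    set D' := Δ (T y)
    set G := ‖g y‖
    have hG0 : 0 ≤ G := norm_nonneg _
    have hD0 : 0 ≤ D := hΔ0 y
    have hD'0 : 0 ≤ D' := hΔ0 (T y)
    have hstep : D' ≤ D - η * c * G ^ 2 := step0 y
    have hpl : μ * D ≤ G ^ 2 := hPL y
    rcases eq_or_lt_of_le hD0 with hD | hD
    · -- D = 0 : G = 0, D' = 0
      have hG2 : G ^ 2 = 0 :=
        le_antisymm (by nlinarith [mul_pos hη hc0, sq_nonneg G]) (sq_nonneg G)
      have hG : G = 0 := by
        have := sq_nonneg G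
        nlinarith [abs_nonneg G]
      have hD' : D' = 0 := by
        have h0 : η * c * G ^ 2 = 0 := by rw [hG2, mul_zero]
        linarith
      rw [hG, ← hD, hD']
      simp
    · -- D > 0
      have hsq : Real.sqrt μ * Real.sqrt D ≤ G := by
        rw [← Real.sqrt_mul hμ.le]
        have := Real.sqrt_le_sqrt hpl
        rwa [Real.sqrt_sq hG0] at this
      have hsqD : 0 < Real.sqrt D := Real.sqrt_pos.mpr hD
      have hDs : Real.sqrt D * Real.sqrt D = D := Real.mul_self_sqrt hD0
      set t : ℝ := η * G * (c * Real.sqrt μ / 2) with ht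
      have hμs : 0 < Real.sqrt μ := Real.sqrt_pos.mpr hμ
      have ht0 : 0 ≤ t := by positivity
      have hmm : G * (Real.sqrt μ * Real.sqrt D) ≤ G * G :=
        mul_le_mul_of_nonneg_left hsq hG0
      have h2t : 2 * t * Real.sqrt D ≤ η * c * G ^ 2 := by
        calc 2 * t * Real.sqrt D = η * c * (G * (Real.sqrt μ * Real.sqrt D)) := by
              rw [ht]; ring
          _ ≤ η * c * (G * G) :=
              mul_le_mul_of_nonneg_left hmm (by positivity)
          _ = η * c * G ^ 2 := by ring
      have htD : t ≤ Real.sqrt D := by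
        have hle : 2 * t * Real.sqrt D ≤ Real.sqrt D * Real.sqrt D := by linarith
        have h2le : 2 * t ≤ Real.sqrt D :=
          le_of_mul_le_mul_right (by linarith) hsqD
        linarith
      have hexp : (Real.sqrt D - t) ^ 2 = D - 2 * t * Real.sqrt D + t ^ 2 := by
        rw [sub_sq, Real.sq_sqrt hD0]
        ring
      have hD'le : D' ≤ (Real.sqrt D - t) ^ 2 := by
        rw [hexp]
        nlinarith [sq_nonneg t]
      have := Real.sqrt_le_sqrt hD'le
      rw [Real.sqrt_sq (by linarith)] at this
      linarith
  -- the iterates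
  set X : ℕ → EuclideanSpace ℝ (Fin n) := fun k => T^[k] x with hX
  have hX0 : X 0 = x := rfl
  have hXs : ∀ k, X (k + 1) = T (X k) := fun k => Function.iterate_succ_apply' T k x
  set c2 : ℝ := c * Real.sqrt μ / 2 with hc2'
  have hc2pos : 0 < c2 := by
    have : 0 < Real.sqrt μ := Real.sqrt_pos.mpr hμ
    positivity
  -- step distance bound
  have hstepdist : ∀ k, c2 * dist (X k) (X (k + 1)) ≤
      Real.sqrt (Δ (X k)) - Real.sqrt (Δ (X (k + 1))) := by
    intro k
    rw [hXs k]
    have hd : dist (X k) (T (X k)) = η * ‖g (X k)‖ := by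
      simp [hT, dist_eq_norm, norm_smul, abs_of_pos hη]
    rw [hd]
    calc c2 * (η * ‖g (X k)‖) = η * ‖g (X k)‖ * (c * Real.sqrt μ / 2) := by ring
      _ ≤ _ := step_sqrt (X k)
  -- telescoping
  have htel : ∀ l m, l ≤ m → c2 * dist (X l) (X m) ≤
      Real.sqrt (Δ (X l)) - Real.sqrt (Δ (X m)) := by
    intro l m hlm
    induction m, hlm using Nat.le_induction with
    | base => simp
    | succ m hlm ih =>
        have h1 := hstepdist m
        have h2 : dist (X l) (X (m + 1)) ≤ dist (X l) (X m) + dist (X m) (X (m + 1)) :=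
          dist_triangle _ _ _
        nlinarith [hc2pos]
  -- geometric decay
  set θ : ℝ := 1 - μ * η * c with hθ
  have hθ0 : 0 ≤ θ := by
    have : μ * η * c ≤ 1 := by nlinarith [mul_nonneg hμ.le hη.le]
    simp only [hθ]; linarith
  have hθ1 : θ < 1 := by
    have : 0 < μ * η * c := by positivity
    simp only [hθ]; linarith
  have hgeo : ∀ k, Δ (X k) ≤ θ ^ k * Δ x := by
    intro k
    induction k with
    | zero => simp [hX0]
    | succ k ih =>
        have h1 : Δ (X (k + 1)) ≤ θ * Δ (X k) := by
          rw [hXs k]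
          have hst := step0 (X k)
          have hpl : μ * Δ (X k) ≤ ‖g (X k)‖ ^ 2 := hPL (X k)
          have hmul : η * c * (μ * Δ (X k)) ≤ η * c * ‖g (X k)‖ ^ 2 :=
            mul_le_mul_of_nonneg_left hpl (by positivity)
          simp only [hθ]
          nlinarith
        calc Δ (X (k + 1)) ≤ θ * Δ (X k) := h1
          _ ≤ θ * (θ ^ k * Δ x) := mul_le_mul_of_nonneg_left ih hθ0
          _ = θ ^ (k + 1) * Δ x := by ring
  have hΔtend : Tendsto (fun k => Δ (X k)) atTop (𝓝 0) := by
    have hub : Tendsto (fun k => θ ^ k * Δ x) atTop (𝓝 0) := by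
      have := tendsto_pow_atTop_nhds_zero_of_lt_one hθ0 hθ1
      simpa using this.mul_const (Δ x)
    exact squeeze_zero (fun k => hΔ0 (X k)) hgeo hub
  have hsqtend : Tendsto (fun k => Real.sqrt (Δ (X k))) atTop (𝓝 0) := by
    have := (Real.continuous_sqrt.tendsto 0).comp hΔtend
    simpa [Function.comp_def] using this
  -- monotone decrease of Δ along X
  have hΔXmono : ∀ l m, l ≤ m → Δ (X m) ≤ Δ (X l) := by
    intro l m hlm
    induction m, hlm using Nat.le_induction with
    | base => exact le_refl _
    | succ m hlm ih => exact le_trans (by rw [hXs m]; exact hΔmono (X m)) ih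
  -- Cauchy
  have hcauchy : CauchySeq X := by
    apply cauchySeq_of_le_tendsto_0 (fun N => Real.sqrt (Δ (X N)) / c2) ?_ ?_
    · intro p q N hp hq
      rcases le_total p q with h | h
      · have h1 := htel p q h
        have h2 : Real.sqrt (Δ (X p)) ≤ Real.sqrt (Δ (X N)) :=
          Real.sqrt_le_sqrt (hΔXmono N p hp)
        have h3 : 0 ≤ Real.sqrt (Δ (X q)) := Real.sqrt_nonneg _
        show dist (X p) (X q) ≤ Real.sqrt (Δ (X N)) / c2
        rw [le_div_iff₀ hc2pos]
        nlinarith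
      · have h1 := htel q p h
        have h2 : Real.sqrt (Δ (X q)) ≤ Real.sqrt (Δ (X N)) :=
          Real.sqrt_le_sqrt (hΔXmono N q hq)
        have h3 : 0 ≤ Real.sqrt (Δ (X p)) := Real.sqrt_nonneg _
        show dist (X p) (X q) ≤ Real.sqrt (Δ (X N)) / c2
        rw [dist_comm, le_div_iff₀ hc2pos]
        nlinarith
    · simpa using hsqtend.div_const c2
  obtain ⟨p, hp⟩ := cauchySeq_tendsto_of_complete hcauchy
  -- f p = f x₀
  have hfp : f p = f x₀ := by
    have h1 : Tendsto (fun k => f (X k)) atTop (𝓝 (f p)) :=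
      (hdiff.continuous.tendsto p).comp hp
    have h2 : Tendsto (fun k => f (X k)) atTop (𝓝 (f x₀)) := by
      have : Tendsto (fun k => f x₀ - Δ (X k)) atTop (𝓝 (f x₀ - 0)) :=
        tendsto_const_nhds.sub hΔtend
      simpa [hΔ] using this
    exact tendsto_nhds_unique h1 h2
  have hpS : p ∈ S := by
    rw [hS]
    exact fun y => (hx₀ y).trans_eq hfp.symm
  -- final bound
  have hdx : c2 * dist x p ≤ Real.sqrt (Δ x) := by
    have hb : ∀ m, c2 * dist x (X m) ≤ Real.sqrt (Δ x) := by
      intro m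
      have := htel 0 m (Nat.zero_le m)
      rw [hX0] at this
      nlinarith [Real.sqrt_nonneg (Δ (X m))]
    have h1 : Tendsto (fun m => c2 * dist x (X m)) atTop (𝓝 (c2 * dist x p)) :=
      (tendsto_const_nhds.mul ((continuous_const.dist continuous_id).tendsto p |>.comp hp))
    exact le_of_tendsto h1 (Eventually.of_forall hb)
  have hinf : Metric.infDist x S ≤ dist x p := Metric.infDist_le_dist_of_mem hpS
  calc (1 - Z * η) * Real.sqrt μ / 2 * Metric.infDist x S
      = c2 * Metric.infDist x S := by rw [hc2', hc]
    _ ≤ c2 * dist x p := mul_le_mul_of_nonneg_left hinf hc2pos.le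
    _ ≤ Real.sqrt (Δ x) := hdx


/-- PL implies quadratic growth (with constant μ/4): if `f : ℝⁿ → ℝ` is differentiable with
`Z`-Lipschitz gradient, its set `S` of global maximizers is nonempty with supremum `f*`, and
`f` satisfies the μ-PL condition `‖∇f(x)‖² ≥ μ (f* − f(x))`, then for every `x`,
`f* − f(x) ≥ (μ/4) · dist(x, S)²`. -/
theorem pl_implies_quadratic_growth
    (n : ℕ) (f : EuclideanSpace ℝ (Fin n) → ℝ)
    (Z : ℝ≥0) (μ : ℝ) (hμ : 0 < μ)
    (hdiff : Differentiable ℝ f)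
    (hlip : LipschitzWith Z (gradient f))
    (S : Set (EuclideanSpace ℝ (Fin n)))
    (hS : S = {x | ∀ y, f y ≤ f x})
    (hSne : S.Nonempty)
    (hPL : ∀ x, μ * (sSup (Set.range f) - f x) ≤ ‖gradient f x‖ ^ 2) :
    ∀ x, μ / 4 * Metric.infDist x S ^ 2 ≤ sSup (Set.range f) - f x := by
  obtain ⟨x₀, hx₀mem⟩ := hSne
  have hx₀ : ∀ y, f y ≤ f x₀ := by rw [hS] at hx₀mem; exact hx₀mem
  have hbdd : BddAbove (Set.range f) := ⟨f x₀, by rintro _ ⟨y, rfl⟩; exact hx₀ y⟩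
  have hfstar : sSup (Set.range f) = f x₀ :=
    le_antisymm (csSup_le (Set.range_nonempty f) (by rintro _ ⟨y, rfl⟩; exact hx₀ y))
      (le_csSup hbdd ⟨x₀, rfl⟩)
  rw [hfstar] at hPL ⊢
  intro x
  set d : ℝ := Metric.infDist x S with hd
  have hd0 : 0 ≤ d := Metric.infDist_nonneg
  set η₀ : ℝ := 1 / (2 * ((Z : ℝ) + μ + 1)) with hη₀
  have hden : (0:ℝ) < 2 * ((Z : ℝ) + μ + 1) := by positivity
  have hη₀pos : 0 < η₀ := by positivity
  -- for every k, apply aux_key with η = η₀ / (k+1)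
  have hkey : ∀ k : ℕ, (1 - (Z : ℝ) * (η₀ / (k + 1))) * Real.sqrt μ / 2 * d ≤
      Real.sqrt (f x₀ - f x) := by
    intro k
    have hk1 : (1:ℝ) ≤ (k : ℝ) + 1 := by exact_mod_cast Nat.one_le_iff_ne_zero.mpr (Nat.succ_ne_zero k)
    have hk0 : (0:ℝ) < (k : ℝ) + 1 := by linarith
    have hηpos : 0 < η₀ / (k + 1) := by positivity
    have hηle : η₀ / (k + 1) ≤ η₀ := by
      rw [div_le_iff₀ hk0]
      nlinarith [hη₀pos]
    have hZη : (Z : ℝ) * (η₀ / (k + 1)) ≤ 1 / 2 := by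
      have h1 : (Z : ℝ) * (η₀ / (k + 1)) ≤ (Z : ℝ) * η₀ :=
        mul_le_mul_of_nonneg_left hηle Z.2
      have h2 : (Z : ℝ) * η₀ ≤ 1 / 2 := by
        rw [hη₀, mul_one_div, div_le_div_iff₀ hden (by norm_num : (0:ℝ) < 2)]
        nlinarith [Z.coe_nonneg, hμ]
      linarith
    have hμη : μ * (η₀ / (k + 1)) ≤ 1 := by
      have h1 : μ * (η₀ / (k + 1)) ≤ μ * η₀ := mul_le_mul_of_nonneg_left hηle hμ.le
      have h2 : μ * η₀ ≤ 1 := by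
        rw [hη₀, mul_one_div, div_le_one hden]
        nlinarith [Z.coe_nonneg, hμ]
      linarith
    exact aux_key hμ hdiff hlip hx₀ hPL hηpos hZη hμη hS x
  -- take the limit k → ∞
  have hηtend : Filter.Tendsto (fun k : ℕ => η₀ / ((k : ℝ) + 1)) Filter.atTop (nhds 0) := by
    simpa [div_eq_mul_inv, mul_comm] using
      (tendsto_one_div_add_atTop_nhds_zero_nat.const_mul η₀)
  have htt : Filter.Tendsto
      (fun k : ℕ => (1 - (Z : ℝ) * (η₀ / (k + 1))) * Real.sqrt μ / 2 * d)
      Filter.atTop (nhds ((1 - (Z : ℝ) * 0) * Real.sqrt μ / 2 * d)) := by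
    exact ((((tendsto_const_nhds.sub (hηtend.const_mul (Z : ℝ))).mul_const
      (Real.sqrt μ)).div_const 2).mul_const d)
  have hlim : Real.sqrt μ / 2 * d ≤ Real.sqrt (f x₀ - f x) := by
    have := le_of_tendsto htt (Filter.Eventually.of_forall hkey)
    simpa using this
  have hΔ0 : 0 ≤ f x₀ - f x := sub_nonneg.mpr (hx₀ x)
  have hsq := mul_self_le_mul_self (by positivity) hlim
  have h1 : Real.sqrt μ * Real.sqrt μ = μ := Real.mul_self_sqrt hμ.le
  have h2 : Real.sqrt (f x₀ - f x) * Real.sqrt (f x₀ - f x) = f x₀ - f x :=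
    Real.mul_self_sqrt hΔ0
  nlinarith [hsq]
end
end

section
/- Let S and A be finite types, N a positive integer, and let r : (Fin N → S) → (Fin N → A) → Fin N → ℝ be permutation-equivariant: for every permutation σ of Fin N, all s : Fin N → S, a : Fin N → A, and all i, r(s∘σ⁻¹, a∘σ⁻¹, σ(i)) = r(s, a, i). Let π : S → A → ℝ be a shared policy assigning weight π(s)(a) to action a in local state s. For each agent i define the marginalized reward r̃_i(s, a₀) = Σ_{a : Fin N → A, a_i = a₀} r(s, a, i) · Π_{j ≠ i} π(s_j)(a_j). Then for any two distinct indices i, i', letting τ be the transposition of i and i', one has r̃_i(s, a₀) = r̃_{i'}(s∘τ, a₀) for all s : Fin N → S and a₀ ∈ A. (Identical-POMDP reward identity, Appendix F) -/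
open Finset

/-- Identical-POMDP reward identity (Appendix F): if the joint reward `r` is
permutation-equivariant and all agents other than the acting one follow a shared policy
`π`, then the marginalized reward of agent `i` at global state `s` equals the marginalized
reward of agent `i'` at the swapped state `s ∘ τ`, where `τ` is the transposition of
`i` and `i'`. -/
theorem identical_pomdp_reward
    (S A : Type*) [Fintype S] [Fintype A] [DecidableEq A]
    (N : ℕ) (hN : 0 < N)
    (r : (Fin N → S) → (Fin N → A) → Fin N → ℝ)
    (hr : ∀ (σ : Equiv.Perm (Fin N)) (s : Fin N → S) (a : Fin N → A) (i : Fin N),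
      r (s ∘ σ.symm) (a ∘ σ.symm) (σ i) = r s a i)
    (π : S → A → ℝ)
    (i i' : Fin N) (hii' : i ≠ i')
    (s : Fin N → S) (a₀ : A) :
    ∑ a ∈ univ.filter (fun a : Fin N → A => a i = a₀),
        r s a i * ∏ j ∈ univ.filter (fun j => j ≠ i), π (s j) (a j)
    = ∑ a ∈ univ.filter (fun a : Fin N → A => a i' = a₀),
        r (s ∘ (Equiv.swap i i')) a i' *
          ∏ j ∈ univ.filter (fun j => j ≠ i'), π ((s ∘ (Equiv.swap i i')) j) (a j) := by

  set τ := Equiv.swap i i' with hτ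
  have hττ : ∀ j, τ (τ j) = j := fun j => Equiv.swap_apply_self i i' j
  have hτi : τ i = i' := Equiv.swap_apply_left i i'
  have hτi' : τ i' = i := Equiv.swap_apply_right i i'
  refine Finset.sum_nbij' (i := fun a => a ∘ τ) (j := fun a => a ∘ τ) ?_ ?_ ?_ ?_ ?_
  · intro a ha
    simp only [mem_filter, mem_univ, true_and] at ha ⊢
    simpa [Function.comp, hτi'] using ha
  · intro a ha
    simp only [mem_filter, mem_univ, true_and] at ha ⊢
    simpa [Function.comp, hτi] using ha
  · intro a _; funext j; simp [Function.comp, hττ]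
  · intro a _; funext j; simp [Function.comp, hττ]
  · intro a ha
    have hsymm : τ.symm = τ := Equiv.symm_swap i i'
    have hrr : r (s ∘ τ) (a ∘ τ) i' = r s a i := by
      have := hr τ s a i
      rw [hsymm, hτi] at this
      exact this
    rw [hrr]
    congr 1
    refine Finset.prod_nbij' (i := fun j => τ j) (j := fun j => τ j) ?_ ?_ ?_ ?_ ?_
    · intro j hj
      simp only [mem_filter, mem_univ, true_and] at hj ⊢
      intro h; apply hj
      have := congrArg τ h
      rwa [hττ, hτi'] at this
    · intro j hj
      simp only [mem_filter, mem_univ, true_and] at hj ⊢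
      intro h; apply hj
      have := congrArg τ h
      rwa [hττ, hτi] at this
    · intro j _; exact hττ j
    · intro j _; exact hττ j
    · intro j _; simp [Function.comp, hττ]
end

section
/- Let S and A be finite types, N a positive integer, and let P : (Fin N → S) → (Fin N → A) → (Fin N → S) → ℝ be permutation-equivariant: for every permutation σ of Fin N, all s, s' : Fin N → S and a : Fin N → A, P(s∘σ⁻¹, a∘σ⁻¹, s'∘σ⁻¹) = P(s, a, s'). Let π : S → A → ℝ be a shared policy. For each agent i define the marginalized transition P̃_i(s, a₀, s') = Σ_{a : Fin N → A, a_i = a₀} P(s, a, s') · Π_{j ≠ i} π(s_j)(a_j). Then for any two distinct indices i, i', letting τ be the transposition of i and i', one has P̃_i(s, a₀, s') = P̃_{i'}(s∘τ, a₀, s'∘τ) for all s, s' : Fin N → S and a₀ ∈ A. (Identical-POMDP transition identity, Appendix F) -/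
open Finset

/-- Identical-POMDP transition identity (Appendix F): if the joint transition kernel `P` is
permutation-equivariant and all agents other than the acting one follow a shared policy
`π`, then the marginalized transition of agent `i` from `s` to `s'` equals the marginalized
transition of agent `i'` from `s ∘ τ` to `s' ∘ τ`, where `τ` is the transposition of
`i` and `i'`. -/
theorem identical_pomdp_transition
    (S A : Type*) [Fintype S] [Fintype A] [DecidableEq A]
    (N : ℕ) (hN : 0 < N)
    (P : (Fin N → S) → (Fin N → A) → (Fin N → S) → ℝ)
    (hP : ∀ (σ : Equiv.Perm (Fin N)) (s : Fin N → S) (a : Fin N → A) (s' : Fin N → S),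
      P (s ∘ σ.symm) (a ∘ σ.symm) (s' ∘ σ.symm) = P s a s')
    (π : S → A → ℝ)
    (i i' : Fin N) (hii' : i ≠ i')
    (s s' : Fin N → S) (a₀ : A) :
    ∑ a ∈ univ.filter (fun a : Fin N → A => a i = a₀),
        P s a s' * ∏ j ∈ univ.filter (fun j => j ≠ i), π (s j) (a j)
    = ∑ a ∈ univ.filter (fun a : Fin N → A => a i' = a₀),
        P (s ∘ (Equiv.swap i i')) a (s' ∘ (Equiv.swap i i')) *
          ∏ j ∈ univ.filter (fun j => j ≠ i'), π ((s ∘ (Equiv.swap i i')) j) (a j) := by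
  classical
  set τ := Equiv.swap i i' with hτ
  refine Finset.sum_nbij' (fun a => a ∘ τ) (fun a => a ∘ τ) ?_ ?_ ?_ ?_ ?_
  · intro a ha
    simp only [mem_filter, mem_univ, true_and] at ha ⊢
    simpa [τ, Equiv.swap_apply_right] using ha
  · intro a ha
    simp only [mem_filter, mem_univ, true_and] at ha ⊢
    simpa [τ, Equiv.swap_apply_left] using ha
  · intro a _
    funext k
    simp [τ, Function.comp]
  · intro a _
    funext k
    simp [τ, Function.comp]
  · intro a ha
    have hPa : P (s ∘ τ) (a ∘ τ) (s' ∘ τ) = P s a s' := by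
      have := hP τ s a s'
      simpa [τ, Equiv.symm_swap] using this
    rw [hPa]
    congr 1
    refine Finset.prod_nbij' (fun k => τ k) (fun k => τ k) ?_ ?_ ?_ ?_ ?_
    · intro k hk
      simp only [mem_filter, mem_univ, true_and] at hk ⊢
      intro h
      apply hk
      have : k = τ i' := by rw [← h]; simp [τ]
      simpa [τ, Equiv.swap_apply_right] using this
    · intro k hk
      simp only [mem_filter, mem_univ, true_and] at hk ⊢
      intro h
      apply hk
      have : k = τ i := by rw [← h]; simp [τ]
      simpa [τ, Equiv.swap_apply_left] using this
    · intro k _; simp [τ]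
    · intro k _; simp [τ]
    · intro k _
      simp [τ, Function.comp]
end
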